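/- Let q be unimodular, and let (F,K_u;P,U,W₁,W₂) and (F',K_u';P',U',W₁',W₂') be two BCL-1 q-data sets, with associated BCL-1 q-model pairs (V₁,V₂) on (H²⊗F) ⊕ K_u and (V₁',V₂') on (H²⊗F') ⊕ K_u'. Then there exists a unitary τ : (H²⊗F) ⊕ K_u → (H²⊗F') ⊕ K_u' with τV_i = V_i'τ for i = 1,2 if and only if there exist unitaries ω : F → F' and ω_u : K_u → K_u' such that ωP = P'ω, ωU = U'ω, ω_uW₁ = W₁'ω_u and ω_uW₂ = W₂'ω_u. -/

import Mathlib

open ContinuousLinearMap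

/-- The model space `(H² ⊗ F) ⊕ K_u`, with `H² ⊗ F` identified with `ℓ²(ℕ, F)`. -/
noncomputable abbrev BCLModelSpace (F Ku : Type*) [NormedAddCommGroup F]
    [InnerProductSpace ℂ F] [NormedAddCommGroup Ku] [InnerProductSpace ℂ Ku] :=
  WithLp 2 ((lp (fun _ : ℕ => F) 2) × Ku)

/-!
The product `T = V₁V₂` of a BCL-1 model pair is `M_z ⊗ I_F ⊕ W₁W₂`: the powers of `q` and `q̄`
cancel because `|q| = 1`. A unitary `τ` intertwining two model pairs intertwines their products,
so it maps the unitary part `⋂ₙ ran Tⁿ = 0 ⊕ K_u` onto the primed one and, being unitary, the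
wandering subspace `(ran T)^⊥ = (1 ⊗ F) ⊕ 0` onto the primed one; these restrictions are `ω_u`
and `ω`, and `τ = (I ⊗ ω) ⊕ ω_u` because `τ` commutes with the shift. Comparing `τV₁ = V₁'τ` on
`1 ⊗ f` in degrees `0` and `1` gives `ωPU = P'U'ω` and `ωP^⊥U = P'^⊥U'ω`, hence `ωU = U'ω`,
and `ωP = P'ω` since `U` is onto. Conversely `(I ⊗ ω) ⊕ ω_u` intertwines the two model pairs.
-/

open scoped InnerProductSpace

lemma ContinuousLinearMap.surjective_of_comp_eq_one {R E : Type*} [Semiring R] [TopologicalSpace E]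
    [AddCommMonoid E] [Module R E] {A B : E →L[R] E} (h : A ∘L B = 1) : Function.Surjective A :=
  fun y => ⟨B y, DFunLike.congr_fun h y⟩

section lpCongrRight

variable {𝕜 ι : Type*} [NormedField 𝕜] {E E' : ι → Type*}
  [∀ i, NormedAddCommGroup (E i)] [∀ i, NormedSpace 𝕜 (E i)]
  [∀ i, NormedAddCommGroup (E' i)] [∀ i, NormedSpace 𝕜 (E' i)]
  {p : ENNReal}

lemma Memℓp.linearIsometryEquiv_apply {f : ∀ i, E i} (hf : Memℓp f p) (e : ∀ i, E i ≃ₗᵢ[𝕜] E' i) :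
    Memℓp (fun i => e i (f i)) p :=
  Memℓp.of_norm (by simpa only [LinearIsometryEquiv.norm_map] using hf.norm)

variable [Fact (1 ≤ p)]

noncomputable def LinearIsometryEquiv.lpCongrRight (e : ∀ i, E i ≃ₗᵢ[𝕜] E' i) :
    lp E p ≃ₗᵢ[𝕜] lp E' p where
  toFun f := ⟨fun i => e i (f i), (lp.memℓp f).linearIsometryEquiv_apply e⟩
  invFun g :=
    ⟨fun i => (e i).symm (g i), (lp.memℓp g).linearIsometryEquiv_apply fun i => (e i).symm⟩
  map_add' f g := lp.ext <| funext fun i => (e i).map_add (f i) (g i)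
  map_smul' c f := lp.ext <| funext fun i => (e i).map_smul c (f i)
  left_inv f := lp.ext <| funext fun i => (e i).symm_apply_apply (f i)
  right_inv g := lp.ext <| funext fun i => (e i).apply_symm_apply (g i)
  norm_map' f := by
    rcases p.trichotomy with rfl | rfl | hp
    · exact absurd (Fact.out : (1 : ENNReal) ≤ 0) (by norm_num)
    · simp [lp.norm_eq_ciSup]
    · simp [lp.norm_eq_tsum_rpow hp]

end lpCongrRight

section restrictRange

variable {𝕜 E E' G G' : Type*} [NormedField 𝕜]
  [NormedAddCommGroup E] [NormedSpace 𝕜 E] [NormedAddCommGroup E'] [NormedSpace 𝕜 E']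
  [NormedAddCommGroup G] [NormedSpace 𝕜 G] [NormedAddCommGroup G'] [NormedSpace 𝕜 G']

noncomputable def LinearIsometryEquiv.restrictRange (τ : E ≃ₗᵢ[𝕜] E') (ι : G →ₗᵢ[𝕜] E)
    (ι' : G' →ₗᵢ[𝕜] E') (h : ∀ x, x ∈ Set.range ι ↔ τ x ∈ Set.range ι') : G ≃ₗᵢ[𝕜] G' :=
  ι.equivRange.trans <| (τ.submoduleMap _).trans <|
    (LinearIsometryEquiv.ofEq _ _ (by
      ext y
      rw [Submodule.mem_map_equiv]
      simpa using h (τ.symm y))).trans ι'.equivRange.symm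

lemma LinearIsometryEquiv.apply_restrictRange (τ : E ≃ₗᵢ[𝕜] E') (ι : G →ₗᵢ[𝕜] E)
    (ι' : G' →ₗᵢ[𝕜] E') (h : ∀ x, x ∈ Set.range ι ↔ τ x ∈ Set.range ι') (g : G) :
    ι' (τ.restrictRange ι ι' h g) = τ (ι g) := by
  simp [LinearIsometryEquiv.restrictRange, ← LinearIsometry.equivRange_apply_coe]

end restrictRange

lemma Function.Semiconj.forall_mem_range_iterate_iff {α β : Type*} {T : α → α} {T' : β → β}
    {τ : α → β} (h : Function.Semiconj τ T T') (hτ : Function.Bijective τ) (x : α) :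
    (∀ n, τ x ∈ Set.range T'^[n]) ↔ ∀ n, x ∈ Set.range T^[n] := by
  refine forall_congr' fun n => ⟨?_, ?_⟩
  · rintro ⟨z, hz⟩
    obtain ⟨z, rfl⟩ := hτ.2 z
    exact ⟨z, hτ.1 (by rw [h.iterate_right n, hz])⟩
  · rintro ⟨z, rfl⟩
    exact ⟨τ z, (h.iterate_right n z).symm⟩

lemma Function.Semiconj.forall_inner_apply_eq_zero_iff {𝕜 E E' : Type*} [RCLike 𝕜]
    [NormedAddCommGroup E] [InnerProductSpace 𝕜 E] [NormedAddCommGroup E'] [InnerProductSpace 𝕜 E']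
    {T : E → E} {T' : E' → E'} {τ : E ≃ₗᵢ[𝕜] E'} (h : Function.Semiconj τ T T') (x : E) :
    (∀ y, ⟪T' y, τ x⟫_𝕜 = 0) ↔ ∀ y, ⟪T y, x⟫_𝕜 = 0 := by
  simp_rw [τ.surjective.forall, ← h.eq, LinearIsometryEquiv.inner_map_map]

namespace BCLModelSpace

variable {F K : Type*} [NormedAddCommGroup F] [InnerProductSpace ℂ F]
  [NormedAddCommGroup K] [InnerProductSpace ℂ K]

lemma ext {x y : BCLModelSpace F K} (h₁ : x.fst = y.fst) (h₂ : x.snd = y.snd) : x = y :=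
  (WithLp.ext_iff 2).2 (Prod.ext h₁ h₂)

noncomputable def inr : K →ₗᵢ[ℂ] BCLModelSpace F K where
  toFun k := WithLp.toLp 2 (0, k)
  map_add' _ _ := ext (add_zero 0).symm rfl
  map_smul' c _ := ext (smul_zero c).symm rfl
  norm_map' := WithLp.norm_toLp_snd 2 _ K

noncomputable def single (n : ℕ) : F →ₗᵢ[ℂ] BCLModelSpace F K where
  toFun f := WithLp.toLp 2 (lp.single 2 n f, 0)
  map_add' f g := ext (by simp) (add_zero 0).symm
  map_smul' c f := ext (by simp) (smul_zero c).symm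
  norm_map' f := by simp [lp.norm_single]

@[simp] lemma inr_fst (k : K) : (inr k : BCLModelSpace F K).fst = 0 := rfl
@[simp] lemma inr_snd (k : K) : (inr k : BCLModelSpace F K).snd = k := rfl
@[simp] lemma single_fst (n : ℕ) (f : F) :
    (single n f : BCLModelSpace F K).fst = lp.single 2 n f := rfl
@[simp] lemma single_snd (n : ℕ) (f : F) : (single n f : BCLModelSpace F K).snd = 0 := rfl

lemma inner_inr_left (k : K) (x : BCLModelSpace F K) : ⟪inr k, x⟫_ℂ = ⟪k, x.snd⟫_ℂ := by
  simp

lemma inner_single_left (n : ℕ) (f : F) (x : BCLModelSpace F K) :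
    ⟪single n f, x⟫_ℂ = ⟪f, x.fst n⟫_ℂ := by
  simp [lp.inner_single_left]

lemma inner_single_right (n : ℕ) (f : F) (x : BCLModelSpace F K) :
    ⟪x, single n f⟫_ℂ = ⟪x.fst n, f⟫_ℂ := by
  simp [lp.inner_single_right]

lemma mem_range_inr_iff (x : BCLModelSpace F K) : x ∈ Set.range inr ↔ x.fst = 0 :=
  ⟨by rintro ⟨k, rfl⟩; rfl, fun h => ⟨x.snd, ext h.symm rfl⟩⟩

lemma mem_range_single_iff (n : ℕ) (x : BCLModelSpace F K) :
    x ∈ Set.range (single n) ↔ x.snd = 0 ∧ ∀ j ≠ n, x.fst j = 0 := by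
  refine ⟨?_, fun ⟨h₂, h₁⟩ => ⟨x.fst n, ext ?_ (by rw [h₂]; rfl)⟩⟩
  · rintro ⟨f, rfl⟩
    exact ⟨rfl, fun j hj => by simp [hj]⟩
  · refine lp.ext (funext fun j => ?_)
    rcases eq_or_ne j n with rfl | hj
    · simp
    · simp [hj, h₁ j hj]

end BCLModelSpace

open BCLModelSpace

section Shift

variable {F K F' K' : Type*} [NormedAddCommGroup F] [InnerProductSpace ℂ F]
  [NormedAddCommGroup K] [InnerProductSpace ℂ K]
  [NormedAddCommGroup F'] [InnerProductSpace ℂ F'] [NormedAddCommGroup K'] [InnerProductSpace ℂ K']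

/-- `T = M_z ⊗ I_F ⊕ S` on `(H² ⊗ F) ⊕ K`. -/
structure IsShiftSum (T : BCLModelSpace F K → BCLModelSpace F K) (S : K →L[ℂ] K) : Prop where
  fst_zero : ∀ x, (T x).fst 0 = 0
  fst_succ : ∀ x n, (T x).fst (n + 1) = x.fst n
  snd : ∀ x, (T x).snd = S x.snd

namespace IsShiftSum

variable {T : BCLModelSpace F K → BCLModelSpace F K} {S : K →L[ℂ] K}

lemma apply_single (hT : IsShiftSum T S) (n : ℕ) (f : F) : T (single n f) = single (n + 1) f := by
  refine ext (lp.ext (funext fun j => ?_)) (by simp [hT.snd])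
  cases j with
  | zero => simp [hT.fst_zero]
  | succ j => simp [hT.fst_succ, Pi.single_apply]

lemma apply_inr (hT : IsShiftSum T S) (k : K) : T (inr k) = inr (S k) := by
  refine ext (lp.ext (funext fun j => ?_)) (by simp [hT.snd])
  cases j with
  | zero => simp [hT.fst_zero]
  | succ j => simp [hT.fst_succ]

lemma iterate_fst_of_lt (hT : IsShiftSum T S) {j m : ℕ} (hjm : j < m) (x : BCLModelSpace F K) :
    (T^[m] x).fst j = 0 := by
  induction m generalizing j with
  | zero => omega
  | succ m ih =>
    rw [Function.iterate_succ_apply']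
    cases j with
    | zero => exact hT.fst_zero _
    | succ j => rw [hT.fst_succ]; exact ih (by omega)

lemma forall_mem_range_iterate_iff (hT : IsShiftSum T S) (hS : Function.Surjective S)
    (x : BCLModelSpace F K) : (∀ n, x ∈ Set.range T^[n]) ↔ x ∈ Set.range inr := by
  refine ⟨fun h => (mem_range_inr_iff x).2 (lp.ext (funext fun j => ?_)), ?_⟩
  · obtain ⟨z, rfl⟩ := h (j + 1)
    exact hT.iterate_fst_of_lt j.lt_succ_self z
  · rintro ⟨k, rfl⟩ n
    induction n generalizing k with
    | zero => exact ⟨inr k, rfl⟩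
    | succ n ih =>
      obtain ⟨k, rfl⟩ := hS k
      obtain ⟨z, hz⟩ := ih k
      exact ⟨z, by rw [Function.iterate_succ_apply', hz, hT.apply_inr]⟩

lemma forall_inner_apply_eq_zero_iff (hT : IsShiftSum T S) (hS : Function.Surjective S)
    (x : BCLModelSpace F K) : (∀ y, ⟪T y, x⟫_ℂ = 0) ↔ x ∈ Set.range (single 0) := by
  refine ⟨fun h => (mem_range_single_iff 0 x).2 ⟨?_, fun j hj => ?_⟩, ?_⟩
  · refine ext_inner_left ℂ fun k => ?_
    obtain ⟨k, rfl⟩ := hS k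
    rw [inner_zero_right, ← h (inr k), hT.apply_inr, inner_inr_left]
  · obtain ⟨j, rfl⟩ := Nat.exists_eq_succ_of_ne_zero hj
    refine ext_inner_left ℂ fun f => ?_
    rw [inner_zero_right, ← h (single j f), hT.apply_single, inner_single_left]
  · rintro ⟨f, rfl⟩ y
    rw [inner_single_right, hT.fst_zero, inner_zero_left]

end IsShiftSum

section Wold

variable {T : BCLModelSpace F K → BCLModelSpace F K} {S : K →L[ℂ] K}
  {T' : BCLModelSpace F' K' → BCLModelSpace F' K'} {S' : K' →L[ℂ] K'}
  {τ : BCLModelSpace F K ≃ₗᵢ[ℂ] BCLModelSpace F' K'}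

theorem IsShiftSum.exists_apply_inr (hT : IsShiftSum T S) (hT' : IsShiftSum T' S')
    (hS : Function.Surjective S) (hS' : Function.Surjective S') (hτ : Function.Semiconj τ T T') :
    ∃ ωu : K ≃ₗᵢ[ℂ] K', ∀ k, τ (inr k) = inr (ωu k) := by
  have h : ∀ x, x ∈ Set.range inr ↔ τ x ∈ Set.range inr := fun x => by
    rw [← hT.forall_mem_range_iterate_iff hS, ← hT'.forall_mem_range_iterate_iff hS',
      hτ.forall_mem_range_iterate_iff τ.bijective]
  exact ⟨τ.restrictRange inr inr h, fun k => (τ.apply_restrictRange inr inr h k).symm⟩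

theorem IsShiftSum.exists_apply_single (hT : IsShiftSum T S) (hT' : IsShiftSum T' S')
    (hS : Function.Surjective S) (hS' : Function.Surjective S') (hτ : Function.Semiconj τ T T') :
    ∃ ω : F ≃ₗᵢ[ℂ] F', ∀ n f, τ (single n f) = single n (ω f) := by
  have h : ∀ x, x ∈ Set.range (single 0) ↔ τ x ∈ Set.range (single 0) := fun x => by
    rw [← hT.forall_inner_apply_eq_zero_iff hS, ← hT'.forall_inner_apply_eq_zero_iff hS',
      hτ.forall_inner_apply_eq_zero_iff]
  refine ⟨τ.restrictRange (single 0) (single 0) h, fun n f => ?_⟩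
  induction n with
  | zero => exact (τ.apply_restrictRange _ _ h f).symm
  | succ n ih => rw [← hT.apply_single, hτ, ih, hT'.apply_single]

end Wold

end Shift

namespace BCLModelSpace

variable {F K F' K' : Type*} [NormedAddCommGroup F] [InnerProductSpace ℂ F]
  [NormedAddCommGroup K] [InnerProductSpace ℂ K]
  [NormedAddCommGroup F'] [InnerProductSpace ℂ F'] [NormedAddCommGroup K'] [InnerProductSpace ℂ K']

noncomputable def congr (ω : F ≃ₗᵢ[ℂ] F') (ωu : K ≃ₗᵢ[ℂ] K') :
    BCLModelSpace F K ≃ₗᵢ[ℂ] BCLModelSpace F' K' :=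
  LinearIsometryEquiv.withLpProdCongr 2 (LinearIsometryEquiv.lpCongrRight fun _ => ω) ωu

@[simp] lemma congr_fst_apply (ω : F ≃ₗᵢ[ℂ] F') (ωu : K ≃ₗᵢ[ℂ] K') (x : BCLModelSpace F K)
    (n : ℕ) : (congr ω ωu x).fst n = ω (x.fst n) := rfl

@[simp] lemma congr_snd (ω : F ≃ₗᵢ[ℂ] F') (ωu : K ≃ₗᵢ[ℂ] K') (x : BCLModelSpace F K) :
    (congr ω ωu x).snd = ωu x.snd := rfl

end BCLModelSpace

lemma Function.Semiconj.adjoint {𝕜 E E' : Type*} [RCLike 𝕜]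
    [NormedAddCommGroup E] [InnerProductSpace 𝕜 E] [CompleteSpace E]
    [NormedAddCommGroup E'] [InnerProductSpace 𝕜 E'] [CompleteSpace E']
    {A : E →L[𝕜] E} {B : E' →L[𝕜] E'} {ω : E ≃ₗᵢ[𝕜] E'} (h : Function.Semiconj ω A B) :
    Function.Semiconj ω (adjoint A) (adjoint B) := fun y => by
  refine ext_inner_right 𝕜 fun z => ?_
  obtain ⟨z, rfl⟩ := ω.surjective z
  rw [ω.inner_map_map, adjoint_inner_left, adjoint_inner_left, ← h, ω.inner_map_map]

section Model

variable {F K F' K' : Type*} [NormedAddCommGroup F] [InnerProductSpace ℂ F] [CompleteSpace F]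
  [NormedAddCommGroup K] [InnerProductSpace ℂ K]
  [NormedAddCommGroup F'] [InnerProductSpace ℂ F'] [CompleteSpace F']
  [NormedAddCommGroup K'] [InnerProductSpace ℂ K']

/-- The BCL-1 `q`-model pair `(V₁, V₂)` of the data `(F, K; P, U, W₁, W₂)`, coordinatewise. -/
structure IsBCLModel (q : ℂ) (P U : F →L[ℂ] F) (W₁ W₂ : K →L[ℂ] K)
    (V₁ V₂ : BCLModelSpace F K → BCLModelSpace F K) : Prop where
  snd_V₁ : ∀ x, (V₁ x).snd = W₁ x.snd
  fst_V₁_zero : ∀ x, (V₁ x).fst 0 = (1 - P) (U (x.fst 0))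
  fst_V₁_succ : ∀ x n, (V₁ x).fst (n + 1) =
    q ^ (n + 1) • (1 - P) (U (x.fst (n + 1))) + q ^ n • P (U (x.fst n))
  snd_V₂ : ∀ x, (V₂ x).snd = W₂ x.snd
  fst_V₂_zero : ∀ x, (V₂ x).fst 0 = adjoint U (P (x.fst 0))
  fst_V₂_succ : ∀ x n, (V₂ x).fst (n + 1) =
    starRingEnd ℂ q ^ (n + 1) • (adjoint U (P (x.fst (n + 1))) + adjoint U ((1 - P) (x.fst n)))

namespace IsBCLModel

variable {q : ℂ} {P U : F →L[ℂ] F} {W₁ W₂ : K →L[ℂ] K}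
  {V₁ V₂ : BCLModelSpace F K → BCLModelSpace F K}

theorem isShiftSum (h : IsBCLModel q P U W₁ W₂ V₁ V₂) (hq : ‖q‖ = 1) (hP : P ∘L P = P)
    (hU : U ∘L adjoint U = 1) : IsShiftSum (V₁ ∘ V₂) (W₁ ∘L W₂) := by
  have hPP (v : F) : P (P v) = P v := DFunLike.congr_fun hP v
  have hUU (v : F) : U (adjoint U v) = v := DFunLike.congr_fun hU v
  have hqq (m : ℕ) : q ^ m * starRingEnd ℂ q ^ m = 1 := by
    rw [← mul_pow, Complex.mul_conj, Complex.normSq_eq_norm_sq, hq]; norm_num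
  refine ⟨fun x => ?_, fun x n => ?_, fun x => ?_⟩
  · simp [h.fst_V₁_zero, h.fst_V₂_zero, hUU, hPP]
  · have hPU (m : ℕ) : P (U ((V₂ x).fst m)) = starRingEnd ℂ q ^ m • P (x.fst m) := by
      cases m <;> simp [h.fst_V₂_zero, h.fst_V₂_succ, hUU, hPP]
    have hQU :
        (1 - P) (U ((V₂ x).fst (n + 1))) = starRingEnd ℂ q ^ (n + 1) • (1 - P) (x.fst n) := by
      simp [h.fst_V₂_succ, hUU, hPP]
    simp only [Function.comp_apply, h.fst_V₁_succ, hPU, hQU, smul_smul, hqq, one_smul]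
    simp
  · simp [h.snd_V₁, h.snd_V₂]

lemma V₁_inr (h : IsBCLModel q P U W₁ W₂ V₁ V₂) (k : K) : V₁ (inr k) = inr (W₁ k) := by
  refine ext (lp.ext (funext fun j => ?_)) (by simp [h.snd_V₁])
  cases j <;> simp [h.fst_V₁_zero, h.fst_V₁_succ]

lemma V₂_inr (h : IsBCLModel q P U W₁ W₂ V₁ V₂) (k : K) : V₂ (inr k) = inr (W₂ k) := by
  refine ext (lp.ext (funext fun j => ?_)) (by simp [h.snd_V₂])
  cases j <;> simp [h.fst_V₂_zero, h.fst_V₂_succ]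

lemma V₁_single_zero (h : IsBCLModel q P U W₁ W₂ V₁ V₂) (f : F) :
    V₁ (single 0 f) = single 0 ((1 - P) (U f)) + single 1 (P (U f)) := by
  refine ext (lp.ext (funext fun j => ?_)) (by simp [h.snd_V₁])
  rcases j with _ | _ | j <;> simp [h.fst_V₁_zero, h.fst_V₁_succ]

variable {P' U' : F' →L[ℂ] F'} {W₁' W₂' : K' →L[ℂ] K'}
  {V₁' V₂' : BCLModelSpace F' K' → BCLModelSpace F' K'}

theorem semiconj_congr (h : IsBCLModel q P U W₁ W₂ V₁ V₂) (h' : IsBCLModel q P' U' W₁' W₂' V₁' V₂')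
    {ω : F ≃ₗᵢ[ℂ] F'} {ωu : K ≃ₗᵢ[ℂ] K'} (hP : Function.Semiconj ω P P')
    (hU : Function.Semiconj ω U U') (hW₁ : Function.Semiconj ωu W₁ W₁')
    (hW₂ : Function.Semiconj ωu W₂ W₂') :
    Function.Semiconj (congr ω ωu) V₁ V₁' ∧ Function.Semiconj (congr ω ωu) V₂ V₂' := by
  have hU' := hU.adjoint
  constructor <;> intro x
  · refine ext (lp.ext (funext fun j => ?_)) (by simp [h.snd_V₁, h'.snd_V₁, hW₁.eq])
    cases j <;> simp [h.fst_V₁_zero, h.fst_V₁_succ, h'.fst_V₁_zero, h'.fst_V₁_succ, hP.eq, hU.eq]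
  · refine ext (lp.ext (funext fun j => ?_)) (by simp [h.snd_V₂, h'.snd_V₂, hW₂.eq])
    cases j <;> simp [h.fst_V₂_zero, h.fst_V₂_succ, h'.fst_V₂_zero, h'.fst_V₂_succ, hP.eq, hU'.eq]

theorem exists_semiconj_of_semiconj (h : IsBCLModel q P U W₁ W₂ V₁ V₂)
    (h' : IsBCLModel q P' U' W₁' W₂' V₁' V₂') (hq : ‖q‖ = 1) (hP : P ∘L P = P)
    (hP' : P' ∘L P' = P') (hU : U ∘L adjoint U = 1) (hU' : U' ∘L adjoint U' = 1)
    (hW : Function.Surjective (W₁ ∘L W₂)) (hW' : Function.Surjective (W₁' ∘L W₂'))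
    {τ : BCLModelSpace F K ≃ₗᵢ[ℂ] BCLModelSpace F' K'} (hτ₁ : Function.Semiconj τ V₁ V₁')
    (hτ₂ : Function.Semiconj τ V₂ V₂') :
    ∃ (ω : F ≃ₗᵢ[ℂ] F') (ωu : K ≃ₗᵢ[ℂ] K'), Function.Semiconj ω P P' ∧
      Function.Semiconj ω U U' ∧ Function.Semiconj ωu W₁ W₁' ∧ Function.Semiconj ωu W₂ W₂' := by
  have hT := h.isShiftSum hq hP hU
  have hT' := h'.isShiftSum hq hP' hU'
  have hτ := hτ₁.comp_right hτ₂
  obtain ⟨ωu, hωu⟩ := hT.exists_apply_inr hT' hW hW' hτ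
  obtain ⟨ω, hω⟩ := hT.exists_apply_single hT' hW hW' hτ
  have hωU (f : F) : ω (P (U f)) = P' (U' (ω f)) ∧ ω (U f) = U' (ω f) := by
    have e := hτ₁ (single 0 f)
    rw [h.V₁_single_zero, map_add, hω, hω, hω, h'.V₁_single_zero] at e
    have e₀ := congrArg (fun x : BCLModelSpace F' K' => x.fst 0) e
    have e₁ := congrArg (fun x : BCLModelSpace F' K' => x.fst 1) e
    simp at e₀ e₁
    exact ⟨e₁, sub_left_inj.1 (e₁ ▸ e₀)⟩
  have inr_injective := (BCLModelSpace.inr (F := F') : K' →ₗᵢ[ℂ] _).injective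
  refine ⟨ω, ωu, fun x => ?_, fun f => (hωU f).2, fun k => inr_injective ?_,
    fun k => inr_injective ?_⟩
  · have hUU : U (adjoint U x) = x := DFunLike.congr_fun hU x
    calc ω (P x) = ω (P (U (adjoint U x))) := by rw [hUU]
      _ = P' (U' (ω (adjoint U x))) := (hωU _).1
      _ = P' (ω x) := by rw [← (hωU _).2, hUU]
  · rw [← hωu, ← h.V₁_inr, hτ₁, hωu, h'.V₁_inr]
  · rw [← hωu, ← h.V₂_inr, hτ₂, hωu, h'.V₂_inr]

end IsBCLModel

end Model

theorem stmt_6 (q : ℂ) (hq : ‖q‖ = 1)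
    {F Ku F' Ku' : Type*}
    [NormedAddCommGroup F] [InnerProductSpace ℂ F] [CompleteSpace F]
    [NormedAddCommGroup Ku] [InnerProductSpace ℂ Ku] [CompleteSpace Ku]
    [NormedAddCommGroup F'] [InnerProductSpace ℂ F'] [CompleteSpace F']
    [NormedAddCommGroup Ku'] [InnerProductSpace ℂ Ku'] [CompleteSpace Ku']
    (P U : F →L[ℂ] F) (P' U' : F' →L[ℂ] F')
    (hP_idem : P ∘L P = P) (hP'_idem : P' ∘L P' = P')
    (hU₂ : U ∘L adjoint U = 1) (hU'₂ : U' ∘L adjoint U' = 1)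
    (W₁ W₂ : Ku →L[ℂ] Ku) (W₁' W₂' : Ku' →L[ℂ] Ku')
    (hW₁₂ : W₁ ∘L adjoint W₁ = 1) (hW₂₂ : W₂ ∘L adjoint W₂ = 1)
    (hW'₁₂ : W₁' ∘L adjoint W₁' = 1) (hW'₂₂ : W₂' ∘L adjoint W₂' = 1)
    (V₁ V₂ : BCLModelSpace F Ku →L[ℂ] BCLModelSpace F Ku)
    (V₁' V₂' : BCLModelSpace F' Ku' →L[ℂ] BCLModelSpace F' Ku')
    -- V₁ = (R_q ⊗ P^⊥U + M_z R_q ⊗ PU) ⊕ W₁ and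
    -- V₂ = (R_q̄ ⊗ U*P + R_q̄ M_z ⊗ U*P^⊥) ⊕ W₂, described coordinatewise:
    (hV₁u : ∀ x, (WithLp.equiv 2 _ (V₁ x)).2 = W₁ ((WithLp.equiv 2 _ x).2))
    (hV₁0 : ∀ x, ((WithLp.equiv 2 _ (V₁ x)).1 : ∀ _ : ℕ, F) 0
      = (1 - P) (U (((WithLp.equiv 2 _ x).1 : ∀ _ : ℕ, F) 0)))
    (hV₁n : ∀ x, ∀ n : ℕ, ((WithLp.equiv 2 _ (V₁ x)).1 : ∀ _ : ℕ, F) (n + 1)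
      = q ^ (n + 1) • (1 - P) (U (((WithLp.equiv 2 _ x).1 : ∀ _ : ℕ, F) (n + 1)))
        + q ^ n • P (U (((WithLp.equiv 2 _ x).1 : ∀ _ : ℕ, F) n)))
    (hV₂u : ∀ x, (WithLp.equiv 2 _ (V₂ x)).2 = W₂ ((WithLp.equiv 2 _ x).2))
    (hV₂0 : ∀ x, ((WithLp.equiv 2 _ (V₂ x)).1 : ∀ _ : ℕ, F) 0
      = adjoint U (P (((WithLp.equiv 2 _ x).1 : ∀ _ : ℕ, F) 0)))
    (hV₂n : ∀ x, ∀ n : ℕ, ((WithLp.equiv 2 _ (V₂ x)).1 : ∀ _ : ℕ, F) (n + 1)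
      = (starRingEnd ℂ q) ^ (n + 1) •
          (adjoint U (P (((WithLp.equiv 2 _ x).1 : ∀ _ : ℕ, F) (n + 1)))
            + adjoint U ((1 - P) (((WithLp.equiv 2 _ x).1 : ∀ _ : ℕ, F) n))))
    -- and likewise for the primed data:
    (hV₁'u : ∀ x, (WithLp.equiv 2 _ (V₁' x)).2 = W₁' ((WithLp.equiv 2 _ x).2))
    (hV₁'0 : ∀ x, ((WithLp.equiv 2 _ (V₁' x)).1 : ∀ _ : ℕ, F') 0
      = (1 - P') (U' (((WithLp.equiv 2 _ x).1 : ∀ _ : ℕ, F') 0)))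
    (hV₁'n : ∀ x, ∀ n : ℕ, ((WithLp.equiv 2 _ (V₁' x)).1 : ∀ _ : ℕ, F') (n + 1)
      = q ^ (n + 1) • (1 - P') (U' (((WithLp.equiv 2 _ x).1 : ∀ _ : ℕ, F') (n + 1)))
        + q ^ n • P' (U' (((WithLp.equiv 2 _ x).1 : ∀ _ : ℕ, F') n)))
    (hV₂'u : ∀ x, (WithLp.equiv 2 _ (V₂' x)).2 = W₂' ((WithLp.equiv 2 _ x).2))
    (hV₂'0 : ∀ x, ((WithLp.equiv 2 _ (V₂' x)).1 : ∀ _ : ℕ, F') 0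
      = adjoint U' (P' (((WithLp.equiv 2 _ x).1 : ∀ _ : ℕ, F') 0)))
    (hV₂'n : ∀ x, ∀ n : ℕ, ((WithLp.equiv 2 _ (V₂' x)).1 : ∀ _ : ℕ, F') (n + 1)
      = (starRingEnd ℂ q) ^ (n + 1) •
          (adjoint U' (P' (((WithLp.equiv 2 _ x).1 : ∀ _ : ℕ, F') (n + 1)))
            + adjoint U' ((1 - P') (((WithLp.equiv 2 _ x).1 : ∀ _ : ℕ, F') n)))) :
    -- the two model pairs are jointly unitarily equivalent iff
    -- the data sets coincide up to unitaries ω, ω_u :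
    (∃ τ : BCLModelSpace F Ku ≃ₗᵢ[ℂ] BCLModelSpace F' Ku',
        (∀ x, τ (V₁ x) = V₁' (τ x)) ∧ (∀ x, τ (V₂ x) = V₂' (τ x))) ↔
      (∃ (ω : F ≃ₗᵢ[ℂ] F') (ωu : Ku ≃ₗᵢ[ℂ] Ku'),
        (∀ x, ω (P x) = P' (ω x)) ∧ (∀ x, ω (U x) = U' (ω x)) ∧
        (∀ k, ωu (W₁ k) = W₁' (ωu k)) ∧ (∀ k, ωu (W₂ k) = W₂' (ωu k))) := by
  have hM : IsBCLModel q P U W₁ W₂ V₁ V₂ := ⟨hV₁u, hV₁0, hV₁n, hV₂u, hV₂0, hV₂n⟩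
  have hM' : IsBCLModel q P' U' W₁' W₂' V₁' V₂' := ⟨hV₁'u, hV₁'0, hV₁'n, hV₂'u, hV₂'0, hV₂'n⟩
  have hW : Function.Surjective (W₁ ∘L W₂) :=
    (surjective_of_comp_eq_one hW₁₂).comp (surjective_of_comp_eq_one hW₂₂)
  have hW' : Function.Surjective (W₁' ∘L W₂') :=
    (surjective_of_comp_eq_one hW'₁₂).comp (surjective_of_comp_eq_one hW'₂₂)
  exact ⟨fun ⟨_, hτ₁, hτ₂⟩ => hM.exists_semiconj_of_semiconj hM' hq hP_idem hP'_idem hU₂ hU'₂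
      hW hW' hτ₁ hτ₂,
    fun ⟨ω, ωu, hP, hU, hW₁, hW₂⟩ => ⟨congr ω ωu, hM.semiconj_congr hM' hP hU hW₁ hW₂⟩⟩
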